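/- Let A be a local Artinian ring whose residue field is perfect. Then the Contou-Carrère symbol is alternating in the sense that ⟨f, g⟩ · ⟨g, f⟩ = 1 for all units f, g of A((t)). -/

import Mathlib

/-- The data of a Witt-coordinate decomposition of a unit of `A((t))` over a local ring
`A` (Definition 4.6): a winding number `w`, a leading unit `a₀`, the positive Witt
coordinates (`pos i` records `a_{i+1}`), and the finitely many negative Witt coordinates
(`neg i` records `a_{-(i+1)}`), all lying in the maximal ideal. -/
structure CCData (A : Type*) [CommRing A] [IsLocalRing A] where
  w : ℤ
  a0 : Aˣ
  pos : ℕ → A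
  neg : ℕ →₀ A
  neg_mem : ∀ i, neg i ∈ IsLocalRing.maximalIdeal A

/-- The truncated product `a₀ t^w ∏_{i=1}^{N} (1 − aᵢ tⁱ) ∏_{i≥1} (1 − a_{-i} t^{-i})`
attached to a Witt-coordinate datum. -/
noncomputable def CCData.approx {A : Type*} [CommRing A] [IsLocalRing A]
    (d : CCData A) (N : ℕ) : LaurentSeries A :=
  HahnSeries.single d.w (d.a0 : A)
    * ∏ i ∈ Finset.range N, (1 - HahnSeries.single ((i : ℤ) + 1) (d.pos i))
    * d.neg.prod fun i c => 1 - HahnSeries.single (-((i : ℤ) + 1)) c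

/-- `d` is the Witt-coordinate decomposition of `f ∈ A((t))`: for every `N ≥ 1`,
`f` is congruent to the truncated product modulo `t^{w+N+1} A[[t]]`, i.e. all
coefficients of index `≤ w + N` agree. -/
def CCData.IsDecompositionOf {A : Type*} [CommRing A] [IsLocalRing A]
    (d : CCData A) (f : LaurentSeries A) : Prop :=
  ∀ N : ℕ, 1 ≤ N → ∀ k : ℤ, k ≤ d.w + (N : ℤ) → f.coeff k = (d.approx N).coeff k

/-- Integer powers of a ring element, the inverse being taken in the sense of
`Ring.inverse` (this agrees with the usual integer power of a unit). -/
noncomputable def ringZPow {A : Type*} [CommRing A] (x : A) (n : ℤ) : A :=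
  if 0 ≤ n then x ^ n.toNat else Ring.inverse (x ^ (-n).toNat)

/-- The Contou-Carrère symbol of two Witt-coordinate data `d`, `e`:
`(−1)^{w(f)w(g)} a₀^{w(g)} b₀^{−w(f)} ∏_{i,j≥1} (1 − aᵢ^{j/(i,j)} b_{−j}^{i/(i,j)})^{(i,j)}
∏_{i,j≥1} (1 − a_{−i}^{j/(i,j)} bⱼ^{i/(i,j)})^{−(i,j)}`, where `(i,j) = gcd(i,j)`;
the double products have only finitely many factors `≠ 1` and are interpreted as
`finprod`s. -/
noncomputable def CCData.symbol {A : Type*} [CommRing A] [IsLocalRing A]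
    (d e : CCData A) : A :=
  ringZPow (-1 : A) (d.w * e.w) * ringZPow (d.a0 : A) e.w * ringZPow (e.a0 : A) (-d.w)
    * (∏ᶠ i : ℕ, ∏ᶠ j : ℕ,
        ringZPow
          (1 - d.pos i ^ ((j + 1) / Nat.gcd (i + 1) (j + 1))
            * e.neg j ^ ((i + 1) / Nat.gcd (i + 1) (j + 1)))
          (Nat.gcd (i + 1) (j + 1)))
    * (∏ᶠ i : ℕ, ∏ᶠ j : ℕ,
        ringZPow
          (1 - d.neg i ^ ((j + 1) / Nat.gcd (i + 1) (j + 1))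
            * e.pos j ^ ((i + 1) / Nat.gcd (i + 1) (j + 1)))
          (-(Nat.gcd (i + 1) (j + 1) : ℤ)))

open scoped Classical in
/-- The Contou-Carrère symbol `⟨f, g⟩ ∈ A` of `f, g ∈ A((t))`, defined through the
(unique) Witt-coordinate decompositions of `f` and `g` (and equal to `1` by convention
if one of them admits no decomposition, which does not happen for units over a local
Artinian ring). -/
noncomputable def ccSymbol (A : Type*) [CommRing A] [IsLocalRing A]
    (f g : LaurentSeries A) : A :=
  if h : (∃ d : CCData A, d.IsDecompositionOf f) ∧ (∃ e : CCData A, e.IsDecompositionOf g)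
    then (h.1.choose).symbol h.2.choose else 1

/-! The symbol is alternating already at the level of Witt coordinates: in
`d.symbol e * e.symbol d` the signs square to `1`, the powers of the leading units cancel, and
each double product of `d.symbol e` is inverse to the transposed double product of `e.symbol d`.
The double products have finitely many nontrivial factors because the negative coordinates are
nilpotent (in a zero-dimensional local ring the maximal ideal is the nilradical), so they can be
read as one finite product over pairs `(i, j)`, where transposition is harmless. -/

open Function

section RingZPow
variable {A : Type*} [CommRing A]

lemma ringZPow_units_val (u : Aˣ) (n : ℤ) : ringZPow (u : A) n = ((u ^ n : Aˣ) : A) := by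
  unfold ringZPow
  split_ifs with hn
  · rw [← Units.val_pow_eq_pow_val, ← zpow_natCast, Int.toNat_of_nonneg hn]
  · rw [← Units.val_pow_eq_pow_val, Ring.inverse_unit, ← zpow_natCast,
      Int.toNat_of_nonneg (by omega), zpow_neg, inv_inv]

@[simp] lemma ringZPow_one (n : ℤ) : ringZPow (1 : A) n = 1 := by
  simpa using ringZPow_units_val (1 : Aˣ) n

lemma ringZPow_mul_ringZPow_neg {x : A} (hx : IsUnit x) (n : ℤ) :
    ringZPow x n * ringZPow x (-n) = 1 := by
  obtain ⟨u, rfl⟩ := hx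
  rw [ringZPow_units_val, ringZPow_units_val, ← Units.val_mul, ← zpow_add, add_neg_cancel,
    zpow_zero, Units.val_one]

lemma ringZPow_neg_one_mul_self (n : ℤ) : ringZPow (-1 : A) n * ringZPow (-1 : A) n = 1 := by
  have h := ringZPow_units_val (-1 : Aˣ) n
  rw [Units.val_neg, Units.val_one] at h
  rw [h, ← Units.val_mul, ← mul_zpow]
  simp

end RingZPow

lemma finprod_finprod_mul_finprod_finprod_eq_one {α β M : Type*} [CommMonoid M]
    {F : α → β → M} {H : β → α → M} (hF : HasFiniteMulSupport (uncurry F))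
    (hFH : ∀ i j, F i j * H j i = 1) :
    (∏ᶠ i, ∏ᶠ j, F i j) * ∏ᶠ j, ∏ᶠ i, H j i = 1 := by
  have hH : HasFiniteMulSupport (uncurry H ∘ Prod.swap) := by
    refine hF.subset fun ⟨i, j⟩ hH hF1 => hH ?_
    simpa [show F i j = 1 by simpa using hF1] using hFH i j
  have hH' : HasFiniteMulSupport (uncurry H) := hH.comp_of_injective Prod.swap_injective
  calc (∏ᶠ i, ∏ᶠ j, F i j) * ∏ᶠ j, ∏ᶠ i, H j i
      = (∏ᶠ p, uncurry F p) * ∏ᶠ p, uncurry H (Equiv.prodComm α β p) := by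
        rw [finprod_comp_equiv, finprod_curry _ hF, finprod_curry _ hH']
        rfl
    _ = 1 :=
        (finprod_mul_distrib hF hH).symm.trans
          (finprod_eq_one_of_forall_eq_one fun p => hFH p.1 p.2)

lemma finite_setOf_pow_div_gcd_ne_zero {A : Type*} [MonoidWithZero A] (b : ℕ →₀ A)
    (hb : ∀ j, IsNilpotent (b j)) :
    {p : ℕ × ℕ | b p.2 ^ ((p.1 + 1) / (p.1 + 1).gcd (p.2 + 1)) ≠ 0}.Finite := by
  refine (b.support.finite_toSet.biUnion fun j _ =>
    (Set.finite_lt_nat (nilpotencyClass (b j) * (j + 1))).prod (Set.finite_singleton j)).subset ?_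
  rintro ⟨i, j⟩ (hne : b j ^ _ ≠ 0)
  have hgcd : 0 < (i + 1).gcd (j + 1) := Nat.gcd_pos_of_pos_left _ i.succ_pos
  have hexp_pos : 0 < (i + 1) / (i + 1).gcd (j + 1) :=
    Nat.div_pos (Nat.gcd_le_left _ i.succ_pos) hgcd
  have hbj : b j ≠ 0 := fun h => hne (by rw [h, zero_pow hexp_pos.ne'])
  have hexp_lt : (i + 1) / (i + 1).gcd (j + 1) < nilpotencyClass (b j) :=
    lt_of_not_ge fun h => hne (pow_eq_zero_of_le h (pow_nilpotencyClass (hb j)))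
  have hdiv : (i + 1) / (j + 1) ≤ (i + 1) / (i + 1).gcd (j + 1) :=
    Nat.div_le_div_left (Nat.gcd_le_right _ j.succ_pos) hgcd
  have hi : i + 1 < nilpotencyClass (b j) * (j + 1) :=
    (Nat.div_lt_iff_lt_mul j.succ_pos).mp (hdiv.trans_lt hexp_lt)
  simp only [Set.mem_iUnion, Set.mem_prod, Set.mem_ofPred_eq, Set.mem_singleton_iff]
  exact ⟨j, Finsupp.mem_support_iff.mpr hbj, by omega, rfl⟩

namespace CCData
variable {A : Type*} [CommRing A] [IsLocalRing A]

lemma isUnit_one_sub_pos_pow_mul_neg_pow (d e : CCData A) (i j : ℕ) {m n : ℕ} (hn : n ≠ 0) :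
    IsUnit (1 - d.pos i ^ m * e.neg j ^ n) :=
  IsLocalRing.isUnit_one_sub_self_of_mem_nonunits _
    (Ideal.mul_mem_left _ _ (Ideal.pow_mem_of_mem _ (e.neg_mem j) n (Nat.pos_of_ne_zero hn)))

variable [Ring.KrullDimLE 0 A]

lemma isNilpotent_neg (d : CCData A) (j : ℕ) : IsNilpotent (d.neg j) := by
  simpa [← Ring.KrullDimLE.nilradical_eq_maximalIdeal, mem_nilradical] using d.neg_mem j

lemma hasFiniteMulSupport_pos_neg (d e : CCData A) :
    HasFiniteMulSupport (uncurry fun i j : ℕ =>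
      ringZPow
        (1 - d.pos i ^ ((j + 1) / Nat.gcd (i + 1) (j + 1))
          * e.neg j ^ ((i + 1) / Nat.gcd (i + 1) (j + 1)))
        (Nat.gcd (i + 1) (j + 1))) := by
  refine (finite_setOf_pow_div_gcd_ne_zero e.neg e.isNilpotent_neg).subset
    fun ⟨i, j⟩ hne hzero => hne ?_
  simp_all

lemma finprod_pos_neg_mul_finprod_neg_pos (d e : CCData A) :
    (∏ᶠ i : ℕ, ∏ᶠ j : ℕ,
        ringZPow
          (1 - d.pos i ^ ((j + 1) / Nat.gcd (i + 1) (j + 1))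
            * e.neg j ^ ((i + 1) / Nat.gcd (i + 1) (j + 1)))
          (Nat.gcd (i + 1) (j + 1)))
    * (∏ᶠ i : ℕ, ∏ᶠ j : ℕ,
        ringZPow
          (1 - e.neg i ^ ((j + 1) / Nat.gcd (i + 1) (j + 1))
            * d.pos j ^ ((i + 1) / Nat.gcd (i + 1) (j + 1)))
          (-(Nat.gcd (i + 1) (j + 1) : ℤ))) = 1 := by
  refine finprod_finprod_mul_finprod_finprod_eq_one (d.hasFiniteMulSupport_pos_neg e)
    fun i j => ?_
  rw [Nat.gcd_comm (j + 1), mul_comm (e.neg j ^ _)]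
  refine ringZPow_mul_ringZPow_neg (d.isUnit_one_sub_pos_pow_mul_neg_pow e i j ?_) _
  exact (Nat.div_pos (Nat.gcd_le_left _ i.succ_pos) (Nat.gcd_pos_of_pos_left _ i.succ_pos)).ne'

lemma symbol_mul_symbol (d e : CCData A) : d.symbol e * e.symbol d = 1 := by
  have hsign := ringZPow_neg_one_mul_self (A := A) (d.w * e.w)
  have hd := ringZPow_mul_ringZPow_neg d.a0.isUnit e.w
  have he := ringZPow_mul_ringZPow_neg e.a0.isUnit d.w
  have hde := d.finprod_pos_neg_mul_finprod_neg_pos e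
  have hed := e.finprod_pos_neg_mul_finprod_neg_pos d
  unfold symbol
  rw [mul_comm e.w d.w]
  grind

end CCData

theorem stmt10_general {A : Type*} [CommRing A] [IsLocalRing A] [IsArtinianRing A] :
    ∀ f g : LaurentSeries A, IsUnit f → IsUnit g →
      ccSymbol A f g * ccSymbol A g f = 1 := by
  intro f g _ _
  unfold ccSymbol
  by_cases h : (∃ d : CCData A, d.IsDecompositionOf f) ∧ ∃ e : CCData A, e.IsDecompositionOf g
  · rw [dif_pos h, dif_pos ⟨h.2, h.1⟩]
    exact CCData.symbol_mul_symbol _ _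
  · rw [dif_neg h, dif_neg fun h' => h ⟨h'.2, h'.1⟩, mul_one]

/-- The alternating property of the Contou-Carrère symbol (Definition 4.6):
`⟨f, g⟩ · ⟨g, f⟩ = 1` for all units `f`, `g` of `A((t))` over a local Artinian ring
with perfect residue field. -/
theorem stmt10 {A : Type*} [CommRing A] [IsLocalRing A] [IsArtinianRing A]
    [PerfectField (IsLocalRing.ResidueField A)] :
    ∀ f g : LaurentSeries A, IsUnit f → IsUnit g →
      ccSymbol A f g * ccSymbol A g f = 1 :=
  stmt10_general
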